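/- arXiv:2009.02966 — 2 statements merged into one kernel-verified Lean document; each statement's English description precedes it below -/
import Mathlib

section
/- Let L be a frame and L_s a sublattice of L containing 0 that sup-generates L. Then (Spec(L), Δ_L(L_s)) is a locally small space: Δ_L(0) = ∅ belongs to Δ_L(L_s), the family Δ_L(L_s) is closed under binary intersections and binary unions, and ⋃ Δ_L(L_s) = Spec(L); moreover its topology of weakly open sets equals Δ_L(L), and (Spec(L), Δ_L(L)) is a sober topological space. -/
open Set TopologicalSpace

universe u



/-! ### Frames: spectra -/

/-- The set of non-unit primes of a frame. -/
def SpecS (L : Type u) [Order.Frame L] : Set L :=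
  {p | p ≠ ⊤ ∧ ∀ a b : L, p = a ⊓ b → p = a ∨ p = b}

/-- `DeltaS a = { p ∈ Spec L : a ≰ p }`. -/
def DeltaS {L : Type u} [Order.Frame L] (a : L) : Set (SpecS L) :=
  {p | ¬ a ≤ (p : L)}

variable {L M N : Type u} [Order.Frame L] [Order.Frame M] [Order.Frame N]

lemma SpecS.inf_le {p : L} (hp : p ∈ SpecS L) {a b : L} (h : a ⊓ b ≤ p) :
    a ≤ p ∨ b ≤ p := by
  have h1 : p = (p ⊔ a) ⊓ (p ⊔ b) := by
    rw [← sup_inf_left, sup_eq_left.mpr h]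
  rcases hp.2 _ _ h1 with h2 | h2
  · exact Or.inl (by rw [h2]; exact le_sup_right)
  · exact Or.inr (by rw [h2]; exact le_sup_right)

lemma DeltaS_bot : DeltaS (⊥ : L) = ∅ := by
  ext p; simp [DeltaS]

lemma DeltaS_top : DeltaS (⊤ : L) = univ := by
  ext p; simpa [DeltaS, top_le_iff] using p.2.1

lemma DeltaS_inf (a b : L) : DeltaS (a ⊓ b) = DeltaS a ∩ DeltaS b := by
  ext p
  constructor
  · intro hp
    constructor <;> · intro hle; exact hp (le_trans (by simp) hle)
  · rintro ⟨h1, h2⟩ hle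
    rcases SpecS.inf_le p.2 hle with h | h
    · exact h1 h
    · exact h2 h

lemma DeltaS_sup (a b : L) : DeltaS (a ⊔ b) = DeltaS a ∪ DeltaS b := by
  ext p
  constructor
  · intro hp
    by_cases ha : a ≤ (p : L)
    · exact Or.inr fun hb => hp (sup_le ha hb)
    · exact Or.inl ha
  · rintro (h | h) hle
    · exact h (le_trans le_sup_left hle)
    · exact h (le_trans le_sup_right hle)

lemma DeltaS_sSup (S : Set L) : DeltaS (sSup S) = ⋃ a ∈ S, DeltaS a := by
  ext p
  simp only [DeltaS, mem_setOf_eq, mem_iUnion, sSup_le_iff, not_forall]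

/-- The hull-kernel topology on the spectrum of a frame: the open sets are
exactly the sets of the form `DeltaS a`. -/
def specTop (L : Type u) [Order.Frame L] : TopologicalSpace (SpecS L) where
  IsOpen U := U ∈ Set.range (DeltaS (L := L))
  isOpen_univ := ⟨⊤, DeltaS_top⟩
  isOpen_inter := by
    rintro _ _ ⟨a, rfl⟩ ⟨b, rfl⟩
    exact ⟨a ⊓ b, DeltaS_inf a b⟩
  isOpen_sUnion := by
    intro S hS
    refine ⟨sSup {a | DeltaS a ∈ S}, ?_⟩
    rw [DeltaS_sSup]
    apply Set.Subset.antisymm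
    · intro p hp
      simp only [mem_iUnion] at hp ⊢
      obtain ⟨a, ha, hpa⟩ := hp
      exact ⟨_, ha, hpa⟩
    · intro p hp
      rcases hp with ⟨U, hU, hpU⟩
      obtain ⟨a, rfl⟩ := hS U hU
      simp only [mem_iUnion]
      exact ⟨a, hU, hpU⟩

/-! ### Right Galois adjoints -/

/-- The right Galois adjoint of a map between complete lattices. -/
def rAdj [CompleteLattice M] [CompleteLattice L] (h : L → M) : M → L :=
  fun m => sSup {l | h l ≤ m}

lemma gc_rAdj (h : FrameHom L M) : GaloisConnection ⇑h (rAdj ⇑h) := by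
  intro l m
  constructor
  · intro hl; exact le_sSup hl
  · intro hl
    calc h l ≤ h (rAdj (⇑h) m) := OrderHomClass.mono h hl
      _ ≤ m := by
          rw [rAdj, map_sSup]
          apply sSup_le
          rintro _ ⟨l', hl', rfl⟩
          exact hl'

lemma rAdj_id : rAdj (id : L → L) = id := by
  funext m
  exact le_antisymm (sSup_le fun _ h => h) (le_sSup le_rfl)

lemma rAdj_mem_SpecS (h : FrameHom L M) {p : M} (hp : p ∈ SpecS M) :
    rAdj ⇑h p ∈ SpecS L := by
  have gc := gc_rAdj h
  constructor
  · intro htop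
    apply hp.1
    rw [top_le_iff.symm]
    have : h ⊤ ≤ p := (gc ⊤ p).mpr (htop ▸ le_rfl)
    simpa using this
  · intro a b hab
    have hle : h a ⊓ h b ≤ p := by
      rw [← map_inf]
      exact (gc _ p).mpr (le_of_eq hab.symm)
    have h1 : rAdj ⇑h p ≤ a := hab ▸ inf_le_left
    have h2 : rAdj ⇑h p ≤ b := hab ▸ inf_le_right
    rcases SpecS.inf_le hp hle with hc | hc
    · exact Or.inl (le_antisymm h1 ((gc a p).mp hc))
    · exact Or.inr (le_antisymm h2 ((gc b p).mp hc))

/-! ### Way-below, continuous and spatial frames -/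

/-- `b` is way below `a`. -/
def WayBelow (b a : L) : Prop :=
  ∀ D : Set L, D.Nonempty → DirectedOn (· ≤ ·) D → a ≤ sSup D → ∃ d ∈ D, b ≤ d

/-- A continuous frame. -/
def IsContinuousFrame (L : Type u) [Order.Frame L] : Prop :=
  ∀ a : L, a = sSup {b | WayBelow b a}

/-- A spatial frame: every element is a meet of primes. -/
def IsSpatialFrame (L : Type u) [Order.Frame L] : Prop :=
  ∀ a : L, ∃ T ⊆ SpecS L, a = sInf T

/-! ### Dominating and compatible homomorphisms -/

/-- `h` is dominating with respect to the designated sublattices. -/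
def Dominating (sL : Set L) (sM : Set M) (h : L → M) : Prop :=
  ∀ m ∈ sM, ∃ l ∈ sL, h l ⊓ m = m

/-- `h` is compatible with respect to the designated sublattices. -/
def Compatible (sL : Set L) (sM : Set M) (h : L → M) : Prop :=
  ∀ l ∈ sL, ∀ m ∈ sM, h l ⊓ m ∈ sM

/-- The weakly open sets generated by a family: unions of subfamilies. -/
def woF {X : Type u} (Lx : Set (Set X)) : Set (Set X) := {U | ∃ F ⊆ Lx, U = ⋃₀ F}

/-!
Since `Δ` turns joins into unions, a sup-generating sublattice `L_s` yields every `Δ(a)` as a union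
of members of `Δ(L_s)`. In the hull-kernel topology the closure of a prime `p` is the set of primes
above `p`, which gives `T₀`. A closed set `S` is the set of primes above `⋀ S`, and irreducibility of
`S` is exactly what makes `⋀ S` prime; it is then the generic point of `S`.
-/

section SpecTop

attribute [local instance] specTop

lemma isOpen_specTop_iff {U : Set (SpecS L)} : IsOpen U ↔ U ∈ range (DeltaS (L := L)) :=
  Iff.rfl

lemma specTop_specializes_iff {x y : SpecS L} : x ⤳ y ↔ (x : L) ≤ y := by
  rw [specializes_iff_forall_open]
  constructor
  · intro h
    by_contra hxy
    exact h _ ⟨x, rfl⟩ hxy le_rfl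
  · rintro hxy _ ⟨a, rfl⟩ hax hay
    exact hax (hay.trans hxy)

lemma specTop_closure_singleton (x : SpecS L) : closure {x} = {q : SpecS L | (x : L) ≤ q} := by
  ext q
  exact specializes_iff_mem_closure.symm.trans specTop_specializes_iff

lemma t0Space_specTop : T0Space (SpecS L) := by
  refine (t0Space_iff_inseparable _).mpr fun x y hxy => ?_
  obtain ⟨hxy, hyx⟩ := inseparable_iff_specializes_and.mp hxy
  exact Subtype.ext (le_antisymm (specTop_specializes_iff.mp hxy) (specTop_specializes_iff.mp hyx))

lemma inter_DeltaS_nonempty_iff {S : Set (SpecS L)} {c : L} :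
    (S ∩ DeltaS c).Nonempty ↔ ¬ c ≤ sInf (Subtype.val '' S) := by
  simp [DeltaS, Set.Nonempty]

lemma sInf_mem_SpecS_of_isIrreducible {S : Set (SpecS L)} (hS : IsIrreducible S) :
    sInf (Subtype.val '' S) ∈ SpecS L := by
  set a := sInf (Subtype.val '' S)
  obtain ⟨p, hp⟩ := hS.nonempty
  refine ⟨fun ha => p.2.1 (top_le_iff.mp (ha ▸ sInf_le (mem_image_of_mem _ hp))), ?_⟩
  intro c d hcd
  -- if both `Δ(c)` and `Δ(d)` met `S`, irreducibility would make `Δ(c ⊓ d) = Δ(a)` meet `S`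
  have hle : c ≤ a ∨ d ≤ a := by
    by_contra! ⟨hc, hd⟩
    have hcd_meet := hS.2 _ _ ⟨c, rfl⟩ ⟨d, rfl⟩ (inter_DeltaS_nonempty_iff.mpr hc)
      (inter_DeltaS_nonempty_iff.mpr hd)
    rw [← DeltaS_inf, ← hcd] at hcd_meet
    exact inter_DeltaS_nonempty_iff.mp hcd_meet le_rfl
  rcases hle with hc | hd
  · exact Or.inl (le_antisymm (hcd ▸ inf_le_left) hc)
  · exact Or.inr (le_antisymm (hcd ▸ inf_le_right) hd)

lemma setOf_sInf_le_eq_of_isClosed {S : Set (SpecS L)} (hS : IsClosed S) :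
    {q : SpecS L | sInf (Subtype.val '' S) ≤ q} = S := by
  obtain ⟨b, hb⟩ : Sᶜ ∈ range (DeltaS (L := L)) := hS.isOpen_compl
  have hS_eq : S = {q : SpecS L | b ≤ q} := by
    rw [← compl_compl S, ← hb]
    ext q
    simp [DeltaS]
  have hb_le : b ≤ sInf (Subtype.val '' S) := by
    rw [hS_eq]
    exact le_sInf (by rintro _ ⟨q, hq, rfl⟩; exact hq)
  refine Subset.antisymm (fun q hq => ?_) (fun q hq => sInf_le (mem_image_of_mem _ hq))
  rw [hS_eq]
  exact hb_le.trans hq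

lemma quasiSober_specTop : QuasiSober (SpecS L) where
  sober {S} hS hS_closed := by
    refine ⟨⟨_, sInf_mem_SpecS_of_isIrreducible hS⟩, ?_⟩
    rw [IsGenericPoint, specTop_closure_singleton]
    exact setOf_sInf_le_eq_of_isClosed hS_closed

lemma DeltaS_mem_woF_image {s : Set L} (hgen : ∀ a : L, ∃ T ⊆ s, a = sSup T) (a : L) :
    DeltaS a ∈ woF (DeltaS '' s) := by
  obtain ⟨T, hT, rfl⟩ := hgen a
  exact ⟨DeltaS '' T, image_mono hT, by rw [DeltaS_sSup, sUnion_image]⟩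

lemma woF_image_DeltaS_eq_range {s : Set L} (hgen : ∀ a : L, ∃ T ⊆ s, a = sSup T) :
    woF (DeltaS '' s) = range (DeltaS (L := L)) := by
  refine Subset.antisymm ?_ (by rintro _ ⟨a, rfl⟩; exact DeltaS_mem_woF_image hgen a)
  rintro _ ⟨F, hF, rfl⟩
  refine isOpen_specTop_iff.mp (isOpen_sUnion fun U hU => ?_)
  obtain ⟨a, -, rfl⟩ := hF hU
  exact ⟨a, rfl⟩

end SpecTop

lemma sUnion_image_DeltaS_eq_univ {s : Set L} (hgen : ∀ a : L, ∃ T ⊆ s, a = sSup T) :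
    ⋃₀ (DeltaS '' s) = univ := by
  obtain ⟨F, hF, hF_eq⟩ := DeltaS_mem_woF_image hgen ⊤
  rw [DeltaS_top] at hF_eq
  exact univ_subset_iff.mp (hF_eq ▸ sUnion_mono hF)

/-- For a frame `L` with a sup-generating sublattice with zero `L_s`, the pair
`(Spec L, Δ_L(L_s))` is a locally small space whose weakly open sets are
exactly `Δ_L(L)`, and the hull-kernel topology on `Spec L` is sober. -/
theorem spectrum_is_sober_LSS {L : Type u} [Order.Frame L] (s : Set L)
    (hbot : ⊥ ∈ s) (hinf : ∀ a ∈ s, ∀ b ∈ s, a ⊓ b ∈ s)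
    (hsup : ∀ a ∈ s, ∀ b ∈ s, a ⊔ b ∈ s)
    (hgen : ∀ a : L, ∃ T ⊆ s, a = sSup T) :
    DeltaS (⊥ : L) = (∅ : Set (SpecS L)) ∧
    (∅ : Set (SpecS L)) ∈ DeltaS '' s ∧
    (∀ A ∈ DeltaS '' s, ∀ B ∈ DeltaS '' s, A ∩ B ∈ DeltaS '' s) ∧
    (∀ A ∈ DeltaS '' s, ∀ B ∈ DeltaS '' s, A ∪ B ∈ DeltaS '' s) ∧
    ⋃₀ (DeltaS '' s) = (Set.univ : Set (SpecS L)) ∧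
    woF (DeltaS '' s) = Set.range (DeltaS (L := L)) ∧
    @T0Space (SpecS L) (specTop L) ∧
    @QuasiSober (SpecS L) (specTop L) := by
  refine ⟨DeltaS_bot, ⟨⊥, hbot, DeltaS_bot⟩, ?_, ?_, sUnion_image_DeltaS_eq_univ hgen,
    woF_image_DeltaS_eq_range hgen, t0Space_specTop, quasiSober_specTop⟩
  · rintro _ ⟨a, ha, rfl⟩ _ ⟨b, hb, rfl⟩
    exact ⟨a ⊓ b, hinf a ha b hb, DeltaS_inf a b⟩
  · rintro _ ⟨a, ha, rfl⟩ _ ⟨b, hb, rfl⟩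
    exact ⟨a ⊔ b, hsup a ha b hb, DeltaS_sup a b⟩
end

section
/- (Second triangle identity of the spectral adjunction) Let (X, L_X) be a locally small space and λ_X : X → Spec(L_X^wo), x ↦ ext_X{x}. Then for every W ∈ L_X^wo, σ_{L_X^wo}( (L^wo λ_X)_*(W) ) = W; equivalently, (L^wo λ_X)_*(W) = Δ_{L_X^wo}(W) and ⋁{V ∈ L_X^wo : Δ_{L_X^wo}(V) ⊆ Δ_{L_X^wo}(W)} = W. -/
open Set TopologicalSpace

universe u



variable {L M N : Type u} [Order.Frame L] [Order.Frame M] [Order.Frame N]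

/-! ### Locally small spaces -/

/-- A locally small space: a set together with a smopology. -/
structure LSS : Type (u + 1) where
  X : Type u
  L : Set (Set X)
  empty_mem : ∅ ∈ L
  inter_mem : ∀ {A B : Set X}, A ∈ L → B ∈ L → A ∩ B ∈ L
  union_mem : ∀ {A B : Set X}, A ∈ L → B ∈ L → A ∪ B ∈ L
  covers : ∀ x : X, ∃ A ∈ L, x ∈ A

namespace LSS

/-- The weakly open sets: unions of subfamilies of the smopology. -/
def wo (S : LSS.{u}) : Set (Set S.X) := {U | ∃ F ⊆ S.L, U = ⋃₀ F}

lemma mem_wo_iff {S : LSS.{u}} {U : Set S.X} :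
    U ∈ S.wo ↔ ∀ x ∈ U, ∃ A ∈ S.L, x ∈ A ∧ A ⊆ U := by
  constructor
  · rintro ⟨F, hF, rfl⟩ x hx
    obtain ⟨A, hA, hxA⟩ := hx
    exact ⟨A, hF hA, hxA, fun y hy => ⟨A, hA, hy⟩⟩
  · intro h
    refine ⟨{A | A ∈ S.L ∧ A ⊆ U}, fun A hA => hA.1, ?_⟩
    apply Set.Subset.antisymm
    · intro x hx
      obtain ⟨A, hA, hxA, hAU⟩ := h x hx
      exact ⟨A, ⟨hA, hAU⟩, hxA⟩
    · rintro x ⟨A, ⟨_, hAU⟩, hxA⟩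
      exact hAU hxA

lemma L_subset_wo (S : LSS.{u}) : S.L ⊆ S.wo := by
  intro A hA
  exact ⟨{A}, by simpa using hA, by simp⟩

/-- The topology of weakly open sets. -/
def top (S : LSS.{u}) : TopologicalSpace S.X where
  IsOpen U := U ∈ S.wo
  isOpen_univ := mem_wo_iff.mpr fun x _ => by
    obtain ⟨A, hA, hxA⟩ := S.covers x
    exact ⟨A, hA, hxA, subset_univ A⟩
  isOpen_inter := by
    intro U V hU hV
    rw [mem_wo_iff] at hU hV ⊢
    rintro x ⟨hxU, hxV⟩
    obtain ⟨A, hA, hxA, hAU⟩ := hU x hxU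
    obtain ⟨B, hB, hxB, hBV⟩ := hV x hxV
    exact ⟨A ∩ B, S.inter_mem hA hB, ⟨hxA, hxB⟩, inter_subset_inter hAU hBV⟩
  isOpen_sUnion := by
    intro F hF
    rw [mem_wo_iff]
    rintro x ⟨U, hU, hxU⟩
    obtain ⟨A, hA, hxA, hAU⟩ := mem_wo_iff.mp (hF U hU) x hxU
    exact ⟨A, hA, hxA, hAU.trans (subset_sUnion_of_mem hU)⟩

/-- The frame of weakly open sets. -/
abbrev O (S : LSS.{u}) : Type u := @Opens S.X S.top

noncomputable instance (S : LSS.{u}) : Order.Frame S.O :=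
  letI := S.top
  inferInstanceAs (Order.Frame (Opens S.X))

lemma isOpen_iff_mem_wo {S : LSS.{u}} {U : Set S.X} :
    @IsOpen _ S.top U ↔ U ∈ S.wo := Iff.rfl

/-- The exterior of a point: the union of all weakly open sets omitting it. -/
def extSet (S : LSS.{u}) (x : S.X) : Set S.X := ⋃₀ {U ∈ S.wo | x ∉ U}

lemma extSet_mem_wo (S : LSS.{u}) (x : S.X) : S.extSet x ∈ S.wo := by
  rw [mem_wo_iff]
  rintro y ⟨U, ⟨hUwo, hxU⟩, hyU⟩
  obtain ⟨A, hA, hyA, hAU⟩ := mem_wo_iff.mp hUwo y hyU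
  exact ⟨A, hA, hyA, hAU.trans (subset_sUnion_of_mem ⟨hUwo, hxU⟩)⟩

/-- The exterior of a point, as an open set. -/
def extO (S : LSS.{u}) (x : S.X) : S.O :=
  letI := S.top
  ⟨S.extSet x, S.extSet_mem_wo x⟩

end LSS

/-! ### Bounded and continuous maps -/

/-- `f` is a bounded map with respect to the given smopologies. -/
def IsBdd {X Y : Type*} (LX : Set (Set X)) (LY : Set (Set Y)) (f : X → Y) : Prop :=
  ∀ W ∈ LX, ∃ V ∈ LY, W ⊆ f ⁻¹' V

/-- `f` is a continuous map of locally small spaces. -/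
def IsCt {X Y : Type*} (LX : Set (Set X)) (LY : Set (Set Y)) (f : X → Y) : Prop :=
  ∀ V ∈ LY, ∀ W ∈ LX, f ⁻¹' V ∩ W ∈ LX

instance instTopLSS (S : LSS.{u}) : TopologicalSpace S.X := S.top

namespace LSS

lemma not_mem_extSet (S : LSS.{u}) (x : S.X) : x ∉ S.extSet x := by
  rintro ⟨U, ⟨hU, hxU⟩, hx⟩; exact hxU hx

lemma subset_extSet (S : LSS.{u}) {x : S.X} {W : S.O} (h : x ∉ (W : Set S.X)) :
    (W : Set S.X) ⊆ S.extSet x :=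
  subset_sUnion_of_mem ⟨W.2, h⟩

lemma mem_iff_not_le (S : LSS.{u}) {x : S.X} {W : S.O} :
    x ∈ (W : Set S.X) ↔ ¬ W ≤ S.extO x := by
  constructor
  · intro hx hle; exact S.not_mem_extSet x (hle hx)
  · intro h; by_contra hx
    exact h (SetLike.coe_subset_coe.mp (S.subset_extSet hx))

lemma extO_mem_SpecS (S : LSS.{u}) (x : S.X) : S.extO x ∈ SpecS S.O := by
  constructor
  · intro h
    have hx : x ∈ ((⊤ : S.O) : Set S.X) := trivial
    rw [← h] at hx
    exact S.not_mem_extSet x hx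
  · intro a b hab
    by_contra hcon
    push_neg at hcon
    have hxa : x ∈ (a : Set S.X) := by
      by_contra hx
      exact hcon.1 (le_antisymm (hab ▸ inf_le_left)
        (SetLike.coe_subset_coe.mp (S.subset_extSet hx)))
    have hxb : x ∈ (b : Set S.X) := by
      by_contra hx
      exact hcon.2 (le_antisymm (hab ▸ inf_le_right)
        (SetLike.coe_subset_coe.mp (S.subset_extSet hx)))
    have : x ∈ ((a ⊓ b : S.O) : Set S.X) := ⟨hxa, hxb⟩
    rw [← hab] at this
    exact S.not_mem_extSet x this

end LSS

lemma DeltaS_mono {L : Type u} [Order.Frame L] {a b : L} (h : a ≤ b) :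
    DeltaS a ⊆ DeltaS b := fun p hp hle => hp (h.trans hle)

/-- Second triangle identity of the spectral adjunction: for every weakly open
`W`, `σ_{L^wo}((L^wo λ_X)_*(W)) = W`; equivalently `(L^wo λ_X)_*(W) = Δ(W)`
and `⋁{V : Δ(V) ⊆ Δ(W)} = W`. -/

theorem second_triangle_identity (S : LSS.{u}) :
    ∃ lam : S.X → ↥(SpecS S.O),
      (∀ x : S.X, ((lam x : S.O) : Set S.X) = S.extSet x) ∧
      ∀ W : S.O,
        (sSup {V : S.O | DeltaS V ⊆
            ⋃₀ {Z : Set (SpecS S.O) | Z ∈ Set.range (DeltaS (L := S.O)) ∧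
              lam ⁻¹' Z ⊆ (W : Set S.X)}} = W) ∧
        (⋃₀ {Z : Set (SpecS S.O) | Z ∈ Set.range (DeltaS (L := S.O)) ∧
            lam ⁻¹' Z ⊆ (W : Set S.X)} = DeltaS W) ∧
        (sSup {V : S.O | DeltaS V ⊆ DeltaS W} = W) := by
  refine ⟨fun x => ⟨S.extO x, S.extO_mem_SpecS x⟩, fun _ => rfl, ?_⟩
  intro W
  set lam : S.X → ↥(SpecS S.O) := fun x => ⟨S.extO x, S.extO_mem_SpecS x⟩ with hlam
  have hpre : ∀ V : S.O, lam ⁻¹' DeltaS V = (V : Set S.X) := by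
    intro V; ext x
    simp only [mem_preimage, DeltaS, mem_setOf_eq, hlam]
    exact S.mem_iff_not_le.symm
  have h2 : ⋃₀ {Z : Set (SpecS S.O) | Z ∈ Set.range (DeltaS (L := S.O)) ∧
      lam ⁻¹' Z ⊆ (W : Set S.X)} = DeltaS W := by
    apply Set.Subset.antisymm
    · apply sUnion_subset
      rintro Z ⟨⟨V, rfl⟩, hZ⟩
      rw [hpre] at hZ
      exact DeltaS_mono (SetLike.coe_subset_coe.mp hZ)
    · exact subset_sUnion_of_mem ⟨⟨W, rfl⟩, by rw [hpre]⟩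
  have h3 : sSup {V : S.O | DeltaS V ⊆ DeltaS W} = W := by
    apply le_antisymm
    · apply sSup_le
      intro V hV
      rw [← SetLike.coe_subset_coe]
      intro x hx
      have hxd : lam x ∈ DeltaS V := S.mem_iff_not_le.mp hx
      exact S.mem_iff_not_le.mpr (hV hxd)
    · exact le_sSup (fun p hp => hp)
  exact ⟨by rw [h2]; exact h3, h2, h3⟩
end
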